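/- Let r ∈ (0,1), k₀ = √(1−r²)/r, and α the standard circle solution α(t) = √(1−r²)w + r cos(2πt)v₁ + r sin(2πt)v₀. Let V = λ₁ α̇ + λ₂ (α × α̇) be a tangent vector field along α with λ₁, λ₂ : ℝ/ℤ → ℝ twice differentiable. Then V solves the linearized equation 0 = −D_t²V − |α̇|²V + ⟨V,α̇⟩α̇ + |α̇|⁻¹⟨D_tV,α̇⟩ k₀ (α×α̇) + |α̇| k₀ (α × D_tV) if and only if λ₁'' = 2π√(1−r²) λ₂' and λ₂'' + 4π² λ₂ = 0. -/

import Mathlib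

/-! In the frame `T = α̇ / c`, `N = α ⨯₃ T` of the circle, where `c = 2πr`, one has
`α̇ = c T`, `Ṫ = c (k₀ N - α)` and `Ṅ = -c k₀ T`, so the covariant derivative acts on coefficients
by `D_t (a T + b N) = (ȧ - c k₀ b) T + (ḃ + c k₀ a) N`. Writing `V = c (λ₁ T + λ₂ N)`, the
operator becomes `-c (λ₁'' - c k₀ λ₂') T - c (λ₂'' + c² (1 + k₀²) λ₂) N`, and for the circle
`c k₀ = 2π √(1 - r²)` and `c² (1 + k₀²) = 4π²`. Since `T`, `N` are orthonormal, the operator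
vanishes iff both coefficients do. -/

open Real MeasureTheory Filter

noncomputable def dot3 (u v : Fin 3 → ℝ) : ℝ := ∑ i, u i * v i

noncomputable def norm3 (u : Fin 3 → ℝ) : ℝ := Real.sqrt (dot3 u u)

noncomputable def cross3 (u v : Fin 3 → ℝ) : Fin 3 → ℝ :=
  ![u 1 * v 2 - u 2 * v 1, u 2 * v 0 - u 0 * v 2, u 0 * v 1 - u 1 * v 0]

/-- Projection onto the orthogonal complement of `x`. -/
noncomputable def proj3 (x v : Fin 3 → ℝ) : Fin 3 → ℝ := v - dot3 v x • x

/-- Covariant derivative of a tangent field `V` along a sphere-valued curve `γ`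
(tangential projection of the ambient derivative). -/
noncomputable def covDeriv (γ V : ℝ → Fin 3 → ℝ) : ℝ → Fin 3 → ℝ :=
  fun t => proj3 (γ t) (deriv V t)

open Matrix

noncomputable def linearizedCurvatureOp (k : ℝ) (α V : ℝ → Fin 3 → ℝ) (t : ℝ) : Fin 3 → ℝ :=
  -(covDeriv α (covDeriv α V) t)
    - (norm3 (deriv α t)) ^ 2 • V t
    + dot3 (V t) (deriv α t) • deriv α t
    + ((norm3 (deriv α t))⁻¹ * dot3 (covDeriv α V t) (deriv α t) * k) • cross3 (α t) (deriv α t)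
    + (norm3 (deriv α t) * k) • cross3 (α t) (covDeriv α V t)

theorem dot3_eq_dotProduct (u v : Fin 3 → ℝ) : dot3 u v = u ⬝ᵥ v := rfl

theorem cross3_eq_crossProduct (u v : Fin 3 → ℝ) : cross3 u v = u ⨯₃ v := rfl

theorem cross_dot_left (u v : Fin 3 → ℝ) : u ⨯₃ v ⬝ᵥ u = 0 := by
  rw [dotProduct_comm, dot_self_cross]

theorem cross_dot_right (u v : Fin 3 → ℝ) : u ⨯₃ v ⬝ᵥ v = 0 := by
  rw [dotProduct_comm, dot_cross_self]

theorem HasDerivAt.cross {u v : ℝ → Fin 3 → ℝ} {u' v' : Fin 3 → ℝ} {x : ℝ}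
    (hu : HasDerivAt u u' x) (hv : HasDerivAt v v' x) :
    HasDerivAt (fun t => u t ⨯₃ v t) (u x ⨯₃ v' + u' ⨯₃ v x) x :=
  (crossProduct (R := ℝ)).toContinuousBilinearMap.hasDerivAt_of_bilinear (fun _ => hu) fun _ => hv

/-- `α` is a curve on the unit sphere with speed `c`, unit tangent `T` and constant geodesic
curvature `k`; `α ⨯₃ T` is the unit normal of `α` inside the sphere. -/
structure IsDarbouxFrame (α T : ℝ → Fin 3 → ℝ) (c k : ℝ) : Prop where
  hasDerivAt_curve : ∀ t, HasDerivAt α (c • T t) t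
  hasDerivAt_tangent : ∀ t, HasDerivAt T (c • (k • (α t ⨯₃ T t) - α t)) t
  curve_dot_curve : ∀ t, α t ⬝ᵥ α t = 1
  tangent_dot_tangent : ∀ t, T t ⬝ᵥ T t = 1
  tangent_dot_curve : ∀ t, T t ⬝ᵥ α t = 0

namespace IsDarbouxFrame

variable {α T : ℝ → Fin 3 → ℝ} {c k : ℝ}

theorem normal_dot_normal (F : IsDarbouxFrame α T c k) (t : ℝ) :
    α t ⨯₃ T t ⬝ᵥ α t ⨯₃ T t = 1 := by
  rw [cross_dot_cross, F.curve_dot_curve, F.tangent_dot_tangent, dotProduct_comm,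
    F.tangent_dot_curve]
  ring

theorem curve_cross_normal (F : IsDarbouxFrame α T c k) (t : ℝ) :
    α t ⨯₃ (α t ⨯₃ T t) = -T t := by
  rw [cross_cross_eq_smul_sub_smul', dotProduct_comm, F.tangent_dot_curve, F.curve_dot_curve]
  simp

theorem hasDerivAt_normal (F : IsDarbouxFrame α T c k) (t : ℝ) :
    HasDerivAt (fun t => α t ⨯₃ T t) (-(c * k) • T t) t := by
  convert (F.hasDerivAt_curve t).cross (F.hasDerivAt_tangent t) using 1
  simp only [map_smul, map_sub, LinearMap.smul_apply, cross_self, F.curve_cross_normal,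
    smul_zero, sub_zero, add_zero]
  module

theorem frame_dot_tangent (F : IsDarbouxFrame α T c k) (t a b : ℝ) :
    (a • T t + b • α t ⨯₃ T t) ⬝ᵥ T t = a := by
  simp [add_dotProduct, F.tangent_dot_tangent, cross_dot_right]

theorem frame_dot_normal (F : IsDarbouxFrame α T c k) (t a b : ℝ) :
    (a • T t + b • α t ⨯₃ T t) ⬝ᵥ α t ⨯₃ T t = b := by
  simp [add_dotProduct, F.normal_dot_normal, dotProduct_comm (T t), cross_dot_right]

theorem curve_cross_frame (F : IsDarbouxFrame α T c k) (t a b : ℝ) :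
    α t ⨯₃ (a • T t + b • α t ⨯₃ T t) = a • α t ⨯₃ T t - b • T t := by
  simp [F.curve_cross_normal, sub_eq_add_neg]

theorem frame_eq_zero_iff (F : IsDarbouxFrame α T c k) (t a b : ℝ) :
    a • T t + b • α t ⨯₃ T t = 0 ↔ a = 0 ∧ b = 0 := by
  refine ⟨fun h => ⟨?_, ?_⟩, fun ⟨ha, hb⟩ => by simp [ha, hb]⟩
  · simpa [h] using (F.frame_dot_tangent t a b).symm
  · simpa [h] using (F.frame_dot_normal t a b).symm

theorem covDeriv_frame (F : IsDarbouxFrame α T c k) (t : ℝ) {a b : ℝ → ℝ} {a' b' : ℝ}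
    (ha : HasDerivAt a a' t) (hb : HasDerivAt b b' t) :
    covDeriv α (fun t => a t • T t + b t • α t ⨯₃ T t) t
      = (a' - c * k * b t) • T t + (b' + c * k * a t) • α t ⨯₃ T t := by
  have hV : HasDerivAt (fun t => a t • T t + b t • α t ⨯₃ T t) _ t :=
    (ha.smul (F.hasDerivAt_tangent t)).add (hb.smul (F.hasDerivAt_normal t))
  rw [covDeriv, proj3, dot3_eq_dotProduct, hV.deriv]
  simp only [add_dotProduct, smul_dotProduct, sub_dotProduct, F.curve_dot_curve,
    F.tangent_dot_curve, cross_dot_left, smul_eq_mul]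
  module

theorem norm3_deriv_curve (F : IsDarbouxFrame α T c k) (hc : 0 ≤ c) (t : ℝ) :
    norm3 (deriv α t) = c := by
  rw [norm3, (F.hasDerivAt_curve t).deriv, dot3_eq_dotProduct, smul_dotProduct, dotProduct_smul,
    F.tangent_dot_tangent, smul_eq_mul, smul_eq_mul, mul_one, ← sq, Real.sqrt_sq hc]

theorem linearizedCurvatureOp_eq (F : IsDarbouxFrame α T c k) (hc : 0 < c)
    {l₁ l₂ : ℝ → ℝ} (hl₁ : Differentiable ℝ l₁) (hl₁' : Differentiable ℝ (deriv l₁))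
    (hl₂ : Differentiable ℝ l₂) (hl₂' : Differentiable ℝ (deriv l₂)) (t : ℝ) :
    linearizedCurvatureOp k α (fun t => l₁ t • deriv α t + l₂ t • cross3 (α t) (deriv α t)) t
      = (-c * (deriv (deriv l₁) t - c * k * deriv l₂ t)) • T t
        + (-c * (deriv (deriv l₂) t + c ^ 2 * (1 + k ^ 2) * l₂ t)) • α t ⨯₃ T t := by
  have hα : deriv α = fun t => c • T t := funext fun t => (F.hasDerivAt_curve t).deriv
  have hV : (fun t => l₁ t • deriv α t + l₂ t • cross3 (α t) (deriv α t))
      = fun t => (c * l₁ t) • T t + (c * l₂ t) • α t ⨯₃ T t := by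
    simp only [hα, cross3_eq_crossProduct, map_smul, smul_smul, mul_comm c]
  have hDV : covDeriv α (fun t => (c * l₁ t) • T t + (c * l₂ t) • α t ⨯₃ T t)
      = fun t => (c * deriv l₁ t - c * k * (c * l₂ t)) • T t
        + (c * deriv l₂ t + c * k * (c * l₁ t)) • α t ⨯₃ T t :=
    funext fun t => F.covDeriv_frame t ((hl₁ t).hasDerivAt.const_mul c)
      ((hl₂ t).hasDerivAt.const_mul c)
  have hDDV := F.covDeriv_frame t (a := fun t => c * deriv l₁ t - c * k * (c * l₂ t))
    (b := fun t => c * deriv l₂ t + c * k * (c * l₁ t))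
    (((hl₁' t).hasDerivAt.const_mul c).sub (((hl₂ t).hasDerivAt.const_mul c).const_mul (c * k)))
    (((hl₂' t).hasDerivAt.const_mul c).add (((hl₁ t).hasDerivAt.const_mul c).const_mul (c * k)))
  rw [hV, linearizedCurvatureOp, F.norm3_deriv_curve hc.le, hDV, hDDV]
  simp only [hα, dot3_eq_dotProduct, cross3_eq_crossProduct, dotProduct_smul, F.frame_dot_tangent,
    F.curve_cross_frame, map_smul]
  match_scalars <;> field_simp <;> ring

end IsDarbouxFrame

section Circle

variable {u v : Fin 3 → ℝ} {r s : ℝ}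

theorem circle_cross_tangent (hu : u ⬝ᵥ u = 1) (hv : v ⬝ᵥ v = 1) (hvu : v ⬝ᵥ u = 0) (θ : ℝ) :
    (s • u ⨯₃ v + (r * cos θ) • u + (r * sin θ) • v) ⨯₃ ((-sin θ) • u + cos θ • v)
      = r • u ⨯₃ v - (s * cos θ) • u - (s * sin θ) • v := by
  have huv : u ⬝ᵥ v = 0 := by rw [dotProduct_comm, hvu]
  have hwu : u ⨯₃ v ⨯₃ u = v := by simp [cross_cross_eq_smul_sub_smul, hu, hvu]
  have hwv : u ⨯₃ v ⨯₃ v = -u := by simp [cross_cross_eq_smul_sub_smul, hv, huv]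
  have hvu' : v ⨯₃ u = -(u ⨯₃ v) := by rw [cross_anticomm]
  simp only [map_add, map_smul, LinearMap.add_apply, LinearMap.smul_apply,
    cross_self, hwu, hwv, hvu']
  match_scalars
  · ring
  · linear_combination r * sin_sq_add_cos_sq θ
  · ring

theorem isDarbouxFrame_circle (hu : u ⬝ᵥ u = 1) (hv : v ⬝ᵥ v = 1) (hvu : v ⬝ᵥ u = 0)
    (hr : r ≠ 0) (hrs : s ^ 2 + r ^ 2 = 1) :
    IsDarbouxFrame
      (fun t => s • u ⨯₃ v + (r * cos (2 * π * t)) • u + (r * sin (2 * π * t)) • v)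
      (fun t => (-sin (2 * π * t)) • u + cos (2 * π * t) • v) (2 * π * r) (s / r) where
  hasDerivAt_curve t := by
    have hθ := (hasDerivAt_id' t).const_mul (2 * π)
    refine (((hasDerivAt_const t (s • u ⨯₃ v)).add ((hθ.cos.const_mul r).smul_const u)).add
      ((hθ.sin.const_mul r).smul_const v)).congr_deriv ?_
    module
  hasDerivAt_tangent t := by
    have hθ := (hasDerivAt_id' t).const_mul (2 * π)
    refine ((hθ.sin.neg.smul_const u).add (hθ.cos.smul_const v)).congr_deriv ?_
    rw [circle_cross_tangent hu hv hvu]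
    match_scalars <;> field_simp
    · linear_combination cos (2 * π * t) * hrs
    · linear_combination sin (2 * π * t) * hrs
    · ring
  curve_dot_curve t := by
    simp only [add_dotProduct, dotProduct_add, smul_dotProduct, dotProduct_smul, hu, hv, hvu,
      dotProduct_comm u v, cross_dot_left, cross_dot_right, dot_self_cross, dot_cross_self,
      cross_dot_cross, smul_eq_mul]
    linear_combination hrs + r ^ 2 * sin_sq_add_cos_sq (2 * π * t)
  tangent_dot_tangent t := by
    simp only [add_dotProduct, dotProduct_add, smul_dotProduct, dotProduct_smul, hu, hv, hvu,
      dotProduct_comm u v, smul_eq_mul]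
    linear_combination sin_sq_add_cos_sq (2 * π * t)
  tangent_dot_curve t := by
    simp only [add_dotProduct, dotProduct_add, smul_dotProduct, dotProduct_smul, hu, hv, hvu,
      dotProduct_comm u v, dot_self_cross, dot_cross_self, smul_eq_mul]
    ring

end Circle

theorem stmt14_general (r : ℝ) (hr : 0 < r) (hr1 : r < 1)
    (v₀ v₁ w : Fin 3 → ℝ)
    (h00 : dot3 v₀ v₀ = 1) (h11 : dot3 v₁ v₁ = 1)
    (h01 : dot3 v₀ v₁ = 0)
    (horient : cross3 v₁ v₀ = w)
    (l₁ l₂ : ℝ → ℝ) (hl₁ : ContDiff ℝ 2 l₁) (hl₂ : ContDiff ℝ 2 l₂) :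
    let k₀ : ℝ := Real.sqrt (1 - r ^ 2) / r
    let α : ℝ → Fin 3 → ℝ := fun t =>
      Real.sqrt (1 - r ^ 2) • w + (r * Real.cos (2 * π * t)) • v₁
        + (r * Real.sin (2 * π * t)) • v₀
    let V : ℝ → Fin 3 → ℝ := fun t =>
      l₁ t • deriv α t + l₂ t • cross3 (α t) (deriv α t)
    (∀ t, (0 : Fin 3 → ℝ)
        = -(covDeriv α (covDeriv α V) t)
          - (norm3 (deriv α t)) ^ 2 • V t
          + dot3 (V t) (deriv α t) • deriv α t
          + ((norm3 (deriv α t))⁻¹ * dot3 (covDeriv α V t) (deriv α t) * k₀)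
              • cross3 (α t) (deriv α t)
          + (norm3 (deriv α t) * k₀) • cross3 (α t) (covDeriv α V t)) ↔
    ((∀ t, deriv (deriv l₁) t = 2 * π * Real.sqrt (1 - r ^ 2) * deriv l₂ t) ∧
     (∀ t, deriv (deriv l₂) t + 4 * π ^ 2 * l₂ t = 0)) := by
  intro k₀ α V
  subst horient
  have hs : √(1 - r ^ 2) ^ 2 + r ^ 2 = 1 := by rw [sq_sqrt (by nlinarith)]; ring
  have F : IsDarbouxFrame α _ (2 * π * r) k₀ := isDarbouxFrame_circle h11 h00 h01 hr.ne' hs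
  have hc : 0 < 2 * π * r := by positivity
  have hck : 2 * π * r * k₀ = 2 * π * √(1 - r ^ 2) := by simp only [k₀]; field_simp
  have hcck : (2 * π * r) ^ 2 * (1 + k₀ ^ 2) = 4 * π ^ 2 := by
    simp only [k₀]; field_simp; linear_combination 4 * hs
  change (∀ t, 0 = linearizedCurvatureOp k₀ α
    (fun t => l₁ t • deriv α t + l₂ t • cross3 (α t) (deriv α t)) t) ↔ _
  simp only [F.linearizedCurvatureOp_eq hc (hl₁.differentiable (by norm_num))
    hl₁.differentiable_deriv_two (hl₂.differentiable (by norm_num)) hl₂.differentiable_deriv_two,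
    eq_comm (a := (0 : Fin 3 → ℝ)), F.frame_eq_zero_iff, mul_eq_zero, neg_eq_zero, hc.ne',
    false_or, hck, hcck, sub_eq_zero, forall_and]

theorem stmt14 (r : ℝ) (hr : 0 < r) (hr1 : r < 1)
    (v₀ v₁ w : Fin 3 → ℝ)
    (h00 : dot3 v₀ v₀ = 1) (h11 : dot3 v₁ v₁ = 1) (hww : dot3 w w = 1)
    (h01 : dot3 v₀ v₁ = 0) (h0w : dot3 v₀ w = 0) (h1w : dot3 v₁ w = 0)
    (horient : cross3 v₁ v₀ = w)
    (l₁ l₂ : ℝ → ℝ) (hl₁ : ContDiff ℝ 2 l₁) (hl₂ : ContDiff ℝ 2 l₂) :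
    let k₀ : ℝ := Real.sqrt (1 - r ^ 2) / r
    let α : ℝ → Fin 3 → ℝ := fun t =>
      Real.sqrt (1 - r ^ 2) • w + (r * Real.cos (2 * π * t)) • v₁
        + (r * Real.sin (2 * π * t)) • v₀
    let V : ℝ → Fin 3 → ℝ := fun t =>
      l₁ t • deriv α t + l₂ t • cross3 (α t) (deriv α t)
    (∀ t, (0 : Fin 3 → ℝ)
        = -(covDeriv α (covDeriv α V) t)
          - (norm3 (deriv α t)) ^ 2 • V t
          + dot3 (V t) (deriv α t) • deriv α t
          + ((norm3 (deriv α t))⁻¹ * dot3 (covDeriv α V t) (deriv α t) * k₀)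
              • cross3 (α t) (deriv α t)
          + (norm3 (deriv α t) * k₀) • cross3 (α t) (covDeriv α V t)) ↔
    ((∀ t, deriv (deriv l₁) t = 2 * π * Real.sqrt (1 - r ^ 2) * deriv l₂ t) ∧
     (∀ t, deriv (deriv l₂) t + 4 * π ^ 2 * l₂ t = 0)) :=
  stmt14_general r hr hr1 v₀ v₁ w h00 h11 h01 horient l₁ l₂ hl₁ hl₂
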